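/- Under the hypotheses of the previous theorem with δ = 1: if ‖B₂₁‖_HS < d₀/2 where d₀ = dist(σ(A₁), σ(A₂)) > 0, then the equation Q = ∫_{σ(A₂)} E₂(dμ) B₂₁ (A₁ + B₂₁*Q - μ)⁻¹ has a unique solution Q with ‖Q‖ ≤ 1. -/

import Mathlib

open ContinuousLinearMap

variable {H₁ H₂ : Type*} [NormedAddCommGroup H₁] [InnerProductSpace ℂ H₁] [CompleteSpace H₁]
  [NormedAddCommGroup H₂] [InnerProductSpace ℂ H₂] [CompleteSpace H₂]

/-- A tagged finite partition of the set `σ ⊆ ℂ` into pieces of diameter at most `δ`. -/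
def IsTaggedPartition (σ : Set ℂ) (δ : ℝ) {ι : Type} (s : Finset ι)
    (Δ : ι → Set ℂ) (t : ι → ℂ) : Prop :=
  (∀ i ∈ s, Δ i ⊆ σ ∧ t i ∈ Δ i ∧ Metric.diam (Δ i) ≤ δ) ∧
  (∀ i ∈ s, ∀ j ∈ s, i ≠ j → Disjoint (Δ i) (Δ j)) ∧
  σ = ⋃ i ∈ s, Δ i

/-- `T = ∫_σ E(dμ) ∘ f(μ)` in the sense of norm convergence of Riemann–Stieltjes-type
sums `∑ᵢ E(Δᵢ) ∘ f(μᵢ)` over tagged partitions of `σ`. -/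
def IsSpectralIntegral (E : Set ℂ → (H₂ →L[ℂ] H₂)) (σ : Set ℂ)
    (f : ℂ → (H₁ →L[ℂ] H₂)) (T : H₁ →L[ℂ] H₂) : Prop :=
  ∀ ε > 0, ∃ δ > 0, ∀ (ι : Type) (s : Finset ι) (Δ : ι → Set ℂ) (t : ι → ℂ),
    IsTaggedPartition σ δ s Δ t →
      ‖(∑ i ∈ s, E (Δ i) ∘L f (t i)) - T‖ < ε

/-- `E` is the spectral measure of the (bounded self-adjoint) operator `A`. -/
structure IsSpectralMeasureFor (A : H₂ →L[ℂ] H₂) (E : Set ℂ → (H₂ →L[ℂ] H₂)) : Prop where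
  selfAdjoint : ∀ S, IsSelfAdjoint (E S)
  inter : ∀ S S', E S ∘L E S' = E (S ∩ S')
  empty : E ∅ = 0
  total : E (spectrum ℂ A) = 1
  add : ∀ S S', Disjoint S S' → E (S ∪ S') = E S + E S'
  represents : IsSpectralIntegral E (spectrum ℂ A) (fun μ => μ • (1 : H₂ →L[ℂ] H₂)) A

set_option linter.unusedSectionVars false
set_option maxHeartbeats 1000000

section Aux
local notation "⟪" x ", " y "⟫" => @inner ℂ _ _ x y


theorem R0 (A : H₁ →L[ℂ] H₁) (hA : IsSelfAdjoint A) (μ : ℂ) (d : ℝ) (hd : 0 < d)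
    (hsep : ∀ x ∈ spectrum ℂ A, d ≤ dist x μ) :
    IsUnit (A - μ • 1) ∧ ‖Ring.inverse (A - μ • 1)‖ ≤ 1/d := by
  have hnorm : IsStarNormal A := hA.isStarNormal
  have hne : ∀ x ∈ spectrum ℂ A, x - μ ≠ 0 := by
    intro x hx h
    rw [sub_eq_zero] at h
    subst h
    have := hsep x hx; simp at this; linarith
  have hcont : ContinuousOn (fun z : ℂ => (z - μ)⁻¹) (spectrum ℂ A) :=
    ContinuousOn.inv₀ (by fun_prop) hne
  have hEq : A - μ • 1 = cfc (fun z : ℂ => z - μ) A := by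
    rw [cfc_sub _ _ A (by fun_prop) (by fun_prop), cfc_id' ℂ A, cfc_const μ A,
      Algebra.algebraMap_eq_smul_one]
  have key : (A - μ • 1) * cfc (fun z : ℂ => (z - μ)⁻¹) A = 1 := by
    rw [hEq, ← cfc_mul _ _ A (by fun_prop) hcont,
      cfc_congr (g := fun _ : ℂ => (1:ℂ)) (fun x hx => mul_inv_cancel₀ (hne x hx)),
      cfc_const_one ℂ A]
  have key2 : cfc (fun z : ℂ => (z - μ)⁻¹) A * (A - μ • 1) = 1 := by
    rw [hEq, ← cfc_mul _ _ A hcont (by fun_prop),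
      cfc_congr (g := fun _ : ℂ => (1:ℂ)) (fun x hx => inv_mul_cancel₀ (hne x hx)),
      cfc_const_one ℂ A]
  refine ⟨⟨⟨_, _, key, key2⟩, rfl⟩, ?_⟩
  have : Ring.inverse (A - μ • 1) = cfc (fun z : ℂ => (z - μ)⁻¹) A := by
    rw [show (A - μ • 1) = ((⟨_, _, key, key2⟩ : (H₁ →L[ℂ] H₁)ˣ) : H₁ →L[ℂ] H₁) from rfl,
      Ring.inverse_unit]
    rfl
  rw [this]
  apply norm_cfc_le (by positivity)
  intro x hx
  rw [norm_inv, one_div]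
  apply inv_anti₀ hd
  simpa [Complex.dist_eq] using hsep x hx


theorem neumann {R : Type*} [NormedRing R] [CompleteSpace R] (h1 : ‖(1:R)‖ ≤ 1)
    (u c : R) (hu : IsUnit u) (h : ‖Ring.inverse u * c‖ ≤ 1/2) :
    IsUnit (u + c) ∧ ‖Ring.inverse (u + c)‖ ≤ 2 * ‖Ring.inverse u‖ := by
  set t : R := -(Ring.inverse u * c) with ht
  have htn2 : ‖t‖ ≤ 1/2 := by rw [ht, norm_neg]; exact h
  have htn : ‖t‖ < 1 := by linarith
  have hUinv : Ring.inverse u = ↑hu.unit⁻¹ := by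
    rw [← Ring.inverse_unit hu.unit, IsUnit.unit_spec]
  have hone : u * (↑hu.unit⁻¹ : R) = 1 := by
    rw [← hUinv]; exact Ring.mul_inverse_cancel u hu
  have huc : u + c = u * (1 - t) := by
    rw [ht, mul_sub, mul_one, mul_neg, ← mul_assoc, hUinv, hone, sub_neg_eq_add, one_mul]
  set V : Rˣ := Units.oneSub t htn with hV
  set W : Rˣ := hu.unit * V with hW
  have hWval : (W : R) = u + c := by
    rw [hW, Units.val_mul, IsUnit.unit_spec, hV, Units.val_oneSub, huc]
  have hunit : IsUnit (u + c) := ⟨W, hWval⟩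
  refine ⟨hunit, ?_⟩
  have hinv : Ring.inverse (u + c) = (↑(V⁻¹) : R) * ↑hu.unit⁻¹ := by
    rw [← hWval, Ring.inverse_unit, hW, mul_inv_rev, Units.val_mul]
  rw [hinv, hUinv]
  calc ‖(↑(V⁻¹) : R) * ↑hu.unit⁻¹‖ ≤ ‖(↑(V⁻¹) : R)‖ * ‖(↑hu.unit⁻¹ : R)‖ := norm_mul_le _ _
    _ ≤ 2 * ‖(↑hu.unit⁻¹ : R)‖ := by
        apply mul_le_mul_of_nonneg_right ?_ (norm_nonneg _)
        have hv : (↑(V⁻¹) : R) = ∑' n : ℕ, t ^ n := rfl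
        rw [hv]
        refine (tsum_geometric_le_of_norm_lt_one t htn).trans ?_
        have h2 : (1 - ‖t‖)⁻¹ ≤ 2 := by
          rw [show (2:ℝ) = (1/2)⁻¹ by norm_num]
          apply inv_anti₀ (by norm_num) (by linarith)
        linarith

theorem resolvent_diff {R : Type*} [Ring R] (u v : R) (hu : IsUnit u) (hv : IsUnit v) :
    Ring.inverse u - Ring.inverse v = Ring.inverse u * (v - u) * Ring.inverse v := by
  rw [mul_sub, sub_mul, mul_assoc, Ring.mul_inverse_cancel v hv,
    Ring.inverse_mul_cancel u hu, mul_one, one_mul]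


/-- Operator norm is at most the Hilbert–Schmidt bound (finset version). -/
theorem hs_opnorm {ι : Type*} (e : HilbertBasis ι ℂ H₁) (T : H₁ →L[ℂ] H₂) (C : ℝ) (hC : 0 ≤ C)
    (hb : ∀ F : Finset ι, ∑ i ∈ F, ‖T (e i)‖ ^ 2 ≤ C ^ 2) : ‖T‖ ≤ C := by
  refine opNorm_le_bound T hC fun x => ?_
  have hsum : HasSum (fun i => (e.repr x i) • T (e i)) (T x) := by
    have := (e.hasSum_repr x).mapL T
    simpa using this
  set a : ι → ℝ := fun i => ‖e.repr x i‖ with ha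
  have haBessel : ∀ F : Finset ι, ∑ i ∈ F, a i ^ 2 ≤ ‖x‖ ^ 2 := by
    intro F
    have := (e.orthonormal).sum_inner_products_le (s := F) x
    simpa [ha, e.repr_apply_apply] using this
  have hTe : Summable fun i => ‖T (e i)‖ ^ 2 :=
    summable_of_sum_le (fun i => sq_nonneg _) hb
  have haSum : Summable fun i => a i ^ 2 :=
    summable_of_sum_le (fun i => sq_nonneg _) haBessel
  have hgSum : Summable fun i => a i * ‖T (e i)‖ := by
    apply Summable.of_nonneg_of_le (fun i => mul_nonneg (norm_nonneg _) (norm_nonneg _))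
      (fun i => ?_) (by exact (haSum.add hTe).mul_left (1/2 : ℝ))
    have := sq_nonneg (a i - ‖T (e i)‖)
    simp only []
    nlinarith [sq_nonneg (a i - ‖T (e i)‖)]
  have hnorm : ‖T x‖ ≤ ∑' i, a i * ‖T (e i)‖ := by
    rw [← hsum.tsum_eq]
    refine (norm_tsum_le_tsum_norm ?_).trans_eq ?_
    · simpa [norm_smul, ha] using hgSum
    · simp [norm_smul, ha]
  refine hnorm.trans ?_
  refine Summable.tsum_le_of_sum_le hgSum fun F => ?_
  have hcs := Finset.sum_mul_sq_le_sq_mul_sq F a (fun i => ‖T (e i)‖)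
  have h1 : (∑ i ∈ F, a i * ‖T (e i)‖) ^ 2 ≤ ‖x‖ ^ 2 * C ^ 2 := by
    refine hcs.trans ?_
    exact mul_le_mul (haBessel F) (hb F) (Finset.sum_nonneg fun i _ => sq_nonneg _)
      (sq_nonneg _)
  have h2 : (0:ℝ) ≤ C * ‖x‖ := mul_nonneg hC (norm_nonneg _)
  nlinarith [Finset.sum_nonneg (s := F) (f := fun i => a i * ‖T (e i)‖)
    (fun i _ => mul_nonneg (norm_nonneg _) (norm_nonneg _))]


theorem norm_apply_le_of_idem (P : H₂ →L[ℂ] H₂) (hmove : ∀ u w : H₂, ⟪P u, w⟫ = ⟪u, P w⟫)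
    (y : H₂) (hid : P (P y) = P y) : ‖P y‖ ≤ ‖y‖ := by
  have h1 : (‖P y‖ : ℝ) ^ 2 = RCLike.re ⟪P y, P y⟫ := (inner_self_eq_norm_sq (𝕜 := ℂ) _).symm
  have h2 : ⟪P y, P y⟫ = ⟪y, P y⟫ := by rw [hmove y (P y), hid]
  have h3 : RCLike.re ⟪y, P y⟫ ≤ ‖y‖ * ‖P y‖ :=
    (RCLike.re_le_norm _).trans (norm_inner_le_norm _ _)
  have h4 : ‖P y‖ ^ 2 ≤ ‖y‖ * ‖P y‖ := by rw [h1, h2]; exact h3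
  rcases eq_or_lt_of_le (norm_nonneg (P y)) with h | h
  · rw [← h]; exact norm_nonneg y
  · nlinarith

section E
variable {E : Set ℂ → (H₂ →L[ℂ] H₂)}
  (hsa : ∀ S, IsSelfAdjoint (E S)) (hinter : ∀ S S', E S ∘L E S' = E (S ∩ S'))
  (hempty : E ∅ = 0)

include hsa in
theorem E_inner_move (S : Set ℂ) (u w : H₂) : ⟪E S u, w⟫ = ⟪u, E S w⟫ := by
  conv_lhs => rw [← (hsa S).adjoint_eq]
  exact adjoint_inner_left _ _ _

include hsa hinter hempty in
theorem E_orth {S S' : Set ℂ} (h : Disjoint S S') (u v : H₂) : ⟪E S u, E S' v⟫ = 0 := by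
  rw [E_inner_move hsa, ← comp_apply, hinter, Set.disjoint_iff_inter_eq_empty.mp h, hempty]
  simp

include hsa hinter hempty in
theorem E_sum_norm_sq {κ : Type*} (s : Finset κ) (Δ : κ → Set ℂ)
    (hdisj : ∀ i ∈ s, ∀ j ∈ s, i ≠ j → Disjoint (Δ i) (Δ j)) (y : κ → H₂) :
    ‖∑ i ∈ s, E (Δ i) (y i)‖ ^ 2 = ∑ i ∈ s, ‖E (Δ i) (y i)‖ ^ 2 := by
  have key : ⟪∑ i ∈ s, E (Δ i) (y i), ∑ j ∈ s, E (Δ j) (y j)⟫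
      = ∑ i ∈ s, ⟪E (Δ i) (y i), E (Δ i) (y i)⟫ := by
    rw [sum_inner]
    refine Finset.sum_congr rfl fun i hi => ?_
    rw [inner_sum]
    refine Finset.sum_eq_single_of_mem i hi fun j hj hne => ?_
    exact E_orth hsa hinter hempty (hdisj i hi j hj (fun h => hne h.symm)) _ _
  have h1 : (‖∑ i ∈ s, E (Δ i) (y i)‖ : ℝ) ^ 2
      = RCLike.re ⟪∑ i ∈ s, E (Δ i) (y i), ∑ j ∈ s, E (Δ j) (y j)⟫ :=
    (inner_self_eq_norm_sq (𝕜 := ℂ) _).symm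
  rw [h1, key, map_sum]
  exact Finset.sum_congr rfl fun i hi => inner_self_eq_norm_sq (𝕜 := ℂ) _

include hsa hinter in
theorem E_proj_norm_le (S : Set ℂ) (y : H₂) : ‖E S y‖ ≤ ‖y‖ := by
  refine norm_apply_le_of_idem (E S) (E_inner_move hsa S) y ?_
  rw [← comp_apply, hinter, Set.inter_self]

include hsa hinter hempty in
theorem E_sum_proj_sq_le {κ : Type*} (s : Finset κ) (Δ : κ → Set ℂ)
    (hdisj : ∀ i ∈ s, ∀ j ∈ s, i ≠ j → Disjoint (Δ i) (Δ j)) (y : H₂) :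
    ∑ i ∈ s, ‖E (Δ i) y‖ ^ 2 ≤ ‖y‖ ^ 2 := by
  classical
  set P : H₂ →L[ℂ] H₂ := ∑ i ∈ s, E (Δ i) with hP
  have hPapp : ∀ z : H₂, P z = ∑ i ∈ s, E (Δ i) z := by
    intro z; rw [hP]; simp [ContinuousLinearMap.sum_apply]
  have h1 : ∑ i ∈ s, ‖E (Δ i) y‖ ^ 2 = ‖P y‖ ^ 2 := by
    rw [hPapp, E_sum_norm_sq hsa hinter hempty s Δ hdisj]
  have hdiag : ∀ i ∈ s, ∑ j ∈ s, E (Δ i) (E (Δ j) y) = E (Δ i) y := by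
    intro i hi
    refine Finset.sum_eq_single_of_mem i hi (fun j hj hne => ?_) |>.trans ?_
    · rw [← comp_apply, hinter, Set.disjoint_iff_inter_eq_empty.mp
        (hdisj i hi j hj (fun h => hne h.symm)), hempty]
      simp
    · rw [← comp_apply, hinter, Set.inter_self]
  have hid : P (P y) = P y := by
    rw [hPapp (P y), hPapp y]
    calc ∑ i ∈ s, E (Δ i) (∑ j ∈ s, E (Δ j) y) = ∑ i ∈ s, ∑ j ∈ s, E (Δ i) (E (Δ j) y) := by
          refine Finset.sum_congr rfl fun i _ => ?_
          rw [map_sum]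
      _ = ∑ i ∈ s, E (Δ i) y := Finset.sum_congr rfl hdiag
  have hmove : ∀ u w : H₂, ⟪P u, w⟫ = ⟪u, P w⟫ := by
    intro u w
    rw [hPapp u, hPapp w, sum_inner, inner_sum]
    exact Finset.sum_congr rfl fun i _ => E_inner_move hsa _ _ _
  have h5 := norm_apply_le_of_idem P hmove y hid
  rw [h1]
  have hy := norm_nonneg (P y)
  nlinarith

include hsa hinter hempty in
theorem E_finadd (hadd : ∀ S S', Disjoint S S' → E (S ∪ S') = E S + E S')
    {κ : Type*} (s : Finset κ) (Δ : κ → Set ℂ)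
    (hdisj : ∀ i ∈ s, ∀ j ∈ s, i ≠ j → Disjoint (Δ i) (Δ j)) :
    E (⋃ i ∈ s, Δ i) = ∑ i ∈ s, E (Δ i) := by
  classical
  revert hdisj
  induction s using Finset.induction_on with
  | empty => intro _; simpa using hempty
  | @insert a s ha ih =>
    intro hdisj
    rw [Finset.set_biUnion_insert, hadd _ _ ?_, Finset.sum_insert ha,
      ih (fun i hi j hj hne => hdisj i (Finset.mem_insert_of_mem hi) j
        (Finset.mem_insert_of_mem hj) hne)]
    rw [Set.disjoint_iUnion₂_right]
    intro i hi
    exact hdisj a (Finset.mem_insert_self a s) i (Finset.mem_insert_of_mem hi)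
      (fun h => ha (h ▸ hi))
end E


theorem partition_of_cover {r δ : ℝ} (hr : 0 ≤ r) (hrδ : 2 * r ≤ δ) (F : Finset ℂ) :
    ∀ σ : Set ℂ, σ ⊆ (⋃ x ∈ F, Metric.ball x r) →
      ∃ (s : Finset ℕ) (Δ : ℕ → Set ℂ) (t : ℕ → ℂ), IsTaggedPartition σ δ s Δ t := by
  classical
  induction F using Finset.induction_on with
  | empty =>
    intro σ hσ
    refine ⟨∅, fun _ => ∅, fun _ => 0, ⟨fun i hi => absurd hi (Finset.notMem_empty i),
      fun i hi => absurd hi (Finset.notMem_empty i), ?_⟩⟩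
    simp only [Finset.notMem_empty, Set.iUnion_of_empty, Set.iUnion_empty]
    exact Set.subset_empty_iff.mp (by simpa using hσ)
  | @insert x F hx ih =>
    intro σ hσ
    have hσ' : σ \ Metric.ball x r ⊆ ⋃ y ∈ F, Metric.ball y r := by
      intro z hz
      have := hσ hz.1
      rw [Finset.set_biUnion_insert] at this
      rcases this with h | h
      · exact absurd h hz.2
      · exact h
    obtain ⟨s, Δ, t, ⟨hp1, hp2, hp3⟩⟩ := ih (σ \ Metric.ball x r) hσ'
    rcases Set.eq_empty_or_nonempty (σ ∩ Metric.ball x r) with hne | ⟨t₀, ht₀⟩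
    · have hds : σ \ Metric.ball x r = σ := by
        ext z
        exact ⟨fun h => h.1, fun hz => ⟨hz, fun hb =>
          Set.eq_empty_iff_forall_notMem.mp hne z ⟨hz, hb⟩⟩⟩
      rw [← hds]
      exact ⟨s, Δ, t, hp1, hp2, hp3⟩
    · refine ⟨insert 0 (s.image Nat.succ),
        fun n => Nat.rec (σ ∩ Metric.ball x r) (fun k _ => Δ k) n,
        fun n => Nat.rec t₀ (fun k _ => t k) n, ?_, ?_, ?_⟩
      · intro i hi
        rcases Finset.mem_insert.mp hi with rfl | hi
        · refine ⟨Set.inter_subset_left, ht₀, ?_⟩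
          calc Metric.diam (σ ∩ Metric.ball x r) ≤ Metric.diam (Metric.ball x r) :=
                Metric.diam_mono Set.inter_subset_right Metric.isBounded_ball
            _ ≤ 2 * r := Metric.diam_ball hr
            _ ≤ δ := hrδ
        · obtain ⟨k, hk, rfl⟩ := Finset.mem_image.mp hi
          obtain ⟨ha, hb, hc⟩ := hp1 k hk
          exact ⟨fun z hz => (ha hz).1, hb, hc⟩
      · intro i hi j hj hij
        rcases Finset.mem_insert.mp hi with rfl | hi' <;>
          rcases Finset.mem_insert.mp hj with rfl | hj'
        · exact absurd rfl hij
        · obtain ⟨k, hk, rfl⟩ := Finset.mem_image.mp hj'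
          rw [Set.disjoint_left]
          intro z hz hz'
          exact ((hp1 k hk).1 hz').2 hz.2
        · obtain ⟨k, hk, rfl⟩ := Finset.mem_image.mp hi'
          rw [Set.disjoint_right]
          intro z hz hz'
          exact ((hp1 k hk).1 hz').2 hz.2
        · obtain ⟨k, hk, rfl⟩ := Finset.mem_image.mp hi'
          obtain ⟨l, hl, rfl⟩ := Finset.mem_image.mp hj'
          exact hp2 k hk l hl (fun h => hij (by rw [h]))
      · rw [Finset.set_biUnion_insert, Finset.set_biUnion_finset_image]
        have huni : σ = (σ ∩ Metric.ball x r) ∪ (σ \ Metric.ball x r) :=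
          (Set.inter_union_diff σ _).symm
        rw [hp3] at huni
        exact huni

theorem partition_exists (σ : Set ℂ) (hσ : IsCompact σ) (δ : ℝ) (hδ : 0 < δ) :
    ∃ (s : Finset ℕ) (Δ : ℕ → Set ℂ) (t : ℕ → ℂ), IsTaggedPartition σ δ s Δ t := by
  obtain ⟨b, hbσ, hbfin, hcov⟩ := hσ.elim_finite_subcover_image (ι := ℂ)
    (fun x _ => Metric.isOpen_ball (x := x) (ε := δ/2))
    (fun z hz => Set.mem_biUnion hz (Metric.mem_ball_self (by linarith)))
  refine partition_of_cover (r := δ/2) (δ := δ) (by linarith) (by linarith) hbfin.toFinset σ ?_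
  intro z hz
  have := hcov hz
  simp only [Set.mem_iUnion] at this ⊢
  obtain ⟨i, hi, h⟩ := this
  exact ⟨i, hbfin.mem_toFinset.mpr hi, h⟩


theorem key_bound {ι κ : Type*} (e : HilbertBasis ι ℂ H₁) (B : H₁ →L[ℂ] H₂)
    (hHS : Summable fun i => ‖B (e i)‖ ^ 2)
    {E : Set ℂ → (H₂ →L[ℂ] H₂)}
    (hsa : ∀ S, IsSelfAdjoint (E S)) (hinter : ∀ S S', E S ∘L E S' = E (S ∩ S'))
    (hempty : E ∅ = 0)
    (s : Finset κ) (Δ : κ → Set ℂ)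
    (hdisj : ∀ i ∈ s, ∀ j ∈ s, i ≠ j → Disjoint (Δ i) (Δ j))
    (K : κ → (H₁ →L[ℂ] H₁)) (M : ℝ) (hM : 0 ≤ M) (hK : ∀ i ∈ s, ‖K i‖ ≤ M) :
    ‖∑ i ∈ s, E (Δ i) ∘L (B ∘L K i)‖ ≤ Real.sqrt (∑' i, ‖B (e i)‖ ^ 2) * M := by
  classical
  set h : ℝ := Real.sqrt (∑' i, ‖B (e i)‖ ^ 2) with hh
  have h0 : 0 ≤ h := Real.sqrt_nonneg _
  have hsq : h ^ 2 = ∑' i, ‖B (e i)‖ ^ 2 :=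
    Real.sq_sqrt (tsum_nonneg fun i => sq_nonneg _)
  -- summability of columns
  have hcol : ∀ i : κ, Summable fun j => ‖E (Δ i) (B (e j))‖ ^ 2 := fun i =>
    Summable.of_nonneg_of_le (fun j => sq_nonneg _)
      (fun j => pow_le_pow_left₀ (norm_nonneg _) (E_proj_norm_le hsa hinter _ _) 2) hHS
  set D : κ → ℝ := fun i => ∑' j, ‖E (Δ i) (B (e j))‖ ^ 2 with hD
  have hD0 : ∀ i, 0 ≤ D i := fun i => tsum_nonneg fun j => sq_nonneg _
  have hci : ∀ i, ‖E (Δ i) ∘L B‖ ≤ Real.sqrt (D i) := by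
    intro i
    refine hs_opnorm e _ _ (Real.sqrt_nonneg _) fun F => ?_
    rw [Real.sq_sqrt (hD0 i)]
    exact Summable.sum_le_tsum F (fun j _ => sq_nonneg _) (hcol i)
  have hDsum : ∑ i ∈ s, D i ≤ h ^ 2 := by
    rw [hD, ← Summable.tsum_finsetSum (fun i _ => hcol i), hsq]
    refine Summable.tsum_le_tsum (fun j => E_sum_proj_sq_le hsa hinter hempty s Δ hdisj _)
      (summable_sum fun i _ => hcol i) hHS
  refine opNorm_le_bound _ (mul_nonneg h0 hM) fun x => ?_
  have happ : (∑ i ∈ s, E (Δ i) ∘L (B ∘L K i)) x = ∑ i ∈ s, E (Δ i) (B (K i x)) := by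
    simp [ContinuousLinearMap.sum_apply]
  rw [happ]
  have h2 : ‖∑ i ∈ s, E (Δ i) (B (K i x))‖ ^ 2 = ∑ i ∈ s, ‖E (Δ i) (B (K i x))‖ ^ 2 :=
    E_sum_norm_sq hsa hinter hempty s Δ hdisj _
  have h3 : ∑ i ∈ s, ‖E (Δ i) (B (K i x))‖ ^ 2 ≤ ∑ i ∈ s, D i * (M * ‖x‖) ^ 2 := by
    refine Finset.sum_le_sum fun i hi => ?_
    have e1 : ‖E (Δ i) (B (K i x))‖ ≤ ‖E (Δ i) ∘L B‖ * ‖K i x‖ := by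
      have := (E (Δ i) ∘L B).le_opNorm (K i x)
      simpa using this
    have e2 : ‖K i x‖ ≤ M * ‖x‖ :=
      ((K i).le_opNorm x).trans (mul_le_mul_of_nonneg_right (hK i hi) (norm_nonneg _))
    have e3 : ‖E (Δ i) (B (K i x))‖ ≤ Real.sqrt (D i) * (M * ‖x‖) := by
      refine e1.trans ?_
      exact mul_le_mul (hci i) e2 (norm_nonneg _) (Real.sqrt_nonneg _)
    have := Real.sq_sqrt (hD0 i)
    nlinarith [norm_nonneg (E (Δ i) (B (K i x))), Real.sqrt_nonneg (D i),
      mul_nonneg hM (norm_nonneg x)]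
  have h4 : ‖∑ i ∈ s, E (Δ i) (B (K i x))‖ ^ 2 ≤ (h * M * ‖x‖) ^ 2 := by
    rw [h2]
    calc ∑ i ∈ s, ‖E (Δ i) (B (K i x))‖ ^ 2 ≤ ∑ i ∈ s, D i * (M * ‖x‖) ^ 2 := h3
      _ = (∑ i ∈ s, D i) * (M * ‖x‖) ^ 2 := (Finset.sum_mul _ _ _).symm
      _ ≤ h ^ 2 * (M * ‖x‖) ^ 2 := by
          refine mul_le_mul_of_nonneg_right hDsum (sq_nonneg _)
      _ = (h * M * ‖x‖) ^ 2 := by ring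
  have hb : 0 ≤ h * M * ‖x‖ := by positivity
  nlinarith [norm_nonneg (∑ i ∈ s, E (Δ i) (B (K i x)))]


theorem sum_compL {κ : Type*} (s : Finset κ) (f : κ → (H₂ →L[ℂ] H₂)) (g : H₁ →L[ℂ] H₂) :
    (∑ i ∈ s, f i) ∘L g = ∑ i ∈ s, f i ∘L g := by
  ext x; simp [ContinuousLinearMap.sum_apply]



theorem compare {ι : Type*} (e : HilbertBasis ι ℂ H₁) (B : H₁ →L[ℂ] H₂)
    (hHS : Summable fun i => ‖B (e i)‖ ^ 2)
    {E : Set ℂ → (H₂ →L[ℂ] H₂)}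
    (hsa : ∀ S, IsSelfAdjoint (E S)) (hinter : ∀ S S', E S ∘L E S' = E (S ∩ S'))
    (hempty : E ∅ = 0) (hadd : ∀ S S', Disjoint S S' → E (S ∪ S') = E S + E S')
    (σ : Set ℂ) (hbdd : Bornology.IsBounded σ)
    (G : (H₁ →L[ℂ] H₂) → ℂ → (H₁ →L[ℂ] H₁)) (C hn : ℝ) {δ₁ δ₂ : ℝ} (hC : 0 ≤ C) (hn0 : 0 ≤ hn)
    (Q Q' : H₁ →L[ℂ] H₂) (hδ₁ : 0 ≤ δ₁) (hδ₂ : 0 ≤ δ₂)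
    (hGdiff : ∀ μ ∈ σ, ∀ ν ∈ σ, ‖G Q μ - G Q' ν‖ ≤ C * (dist μ ν + hn * ‖Q - Q'‖))
    {ι₁ ι₂ : Type} {s : Finset ι₁} {Δ : ι₁ → Set ℂ} {t : ι₁ → ℂ}
    {s' : Finset ι₂} {Δ' : ι₂ → Set ℂ} {t' : ι₂ → ℂ}
    (hP : IsTaggedPartition σ δ₁ s Δ t) (hP' : IsTaggedPartition σ δ₂ s' Δ' t') :
    ‖(∑ i ∈ s, E (Δ i) ∘L (B ∘L G Q (t i))) - ∑ j ∈ s', E (Δ' j) ∘L (B ∘L G Q' (t' j))‖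
      ≤ Real.sqrt (∑' i, ‖B (e i)‖ ^ 2) * (C * (δ₁ + δ₂ + hn * ‖Q - Q'‖)) := by
  classical
  obtain ⟨hp1, hp2, hp3⟩ := hP
  obtain ⟨hq1, hq2, hq3⟩ := hP'
  set Pc : ι₁ × ι₂ → Set ℂ := fun p => Δ p.1 ∩ Δ' p.2 with hPc
  -- first sum refined
  have refine1 : ∑ i ∈ s, E (Δ i) ∘L (B ∘L G Q (t i))
      = ∑ p ∈ s ×ˢ s', E (Pc p) ∘L (B ∘L G Q (t p.1)) := by
    rw [Finset.sum_product]
    refine Finset.sum_congr rfl fun i hi => ?_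
    have hsplit : Δ i = ⋃ j ∈ s', Δ i ∩ Δ' j := by
      rw [← Set.inter_iUnion₂, ← hq3]
      exact (Set.inter_eq_self_of_subset_left (hp1 i hi).1).symm
    have : E (Δ i) = ∑ j ∈ s', E (Δ i ∩ Δ' j) := by
      conv_lhs => rw [hsplit]
      exact E_finadd hsa hinter hempty hadd s' _ fun a ha b hb hab =>
        ((hq2 a ha b hb hab).mono Set.inter_subset_right Set.inter_subset_right)
    rw [this, sum_compL]
  have refine2 : ∑ j ∈ s', E (Δ' j) ∘L (B ∘L G Q' (t' j))
      = ∑ p ∈ s ×ˢ s', E (Pc p) ∘L (B ∘L G Q' (t' p.2)) := by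
    rw [Finset.sum_product_right]
    refine Finset.sum_congr rfl fun j hj => ?_
    have hsplit : Δ' j = ⋃ i ∈ s, Δ i ∩ Δ' j := by
      have : ⋃ i ∈ s, Δ i ∩ Δ' j = (⋃ i ∈ s, Δ i) ∩ Δ' j := by
        rw [Set.iUnion₂_inter]
      rw [this, ← hp3]
      exact (Set.inter_eq_self_of_subset_right (hq1 j hj).1).symm
    have : E (Δ' j) = ∑ i ∈ s, E (Δ i ∩ Δ' j) := by
      conv_lhs => rw [hsplit]
      exact E_finadd hsa hinter hempty hadd s _ fun a ha b hb hab =>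
        ((hp2 a ha b hb hab).mono Set.inter_subset_left Set.inter_subset_left)
    rw [this, sum_compL]
  rw [refine1, refine2, ← Finset.sum_sub_distrib]
  have hterm : ∀ p ∈ s ×ˢ s',
      E (Pc p) ∘L (B ∘L G Q (t p.1)) - E (Pc p) ∘L (B ∘L G Q' (t' p.2))
        = E (Pc p) ∘L (B ∘L (G Q (t p.1) - G Q' (t' p.2))) := by
    intro p _
    ext x
    simp [map_sub]
  rw [Finset.sum_congr rfl hterm]
  -- drop empty pieces
  rw [← Finset.sum_filter_of_ne (p := fun p => (Pc p).Nonempty)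
    (fun p _ hne => by
      by_contra hP
      rw [Set.not_nonempty_iff_eq_empty] at hP
      apply hne
      rw [hPc] at hP ⊢
      rw [hP, hempty]
      ext x; simp)]
  refine key_bound e B hHS hsa hinter hempty _ Pc ?_ _ _ ?_ ?_
  · -- disjointness of refined pieces
    intro p hp q hq hpq
    simp only [Finset.mem_filter, Finset.mem_product] at hp hq
    rcases eq_or_ne p.1 q.1 with h1 | h1
    · have h2 : p.2 ≠ q.2 := fun h2 => hpq (Prod.ext h1 h2)
      exact ((hq2 p.2 hp.1.2 q.2 hq.1.2 h2).mono Set.inter_subset_right Set.inter_subset_right)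
    · exact ((hp2 p.1 hp.1.1 q.1 hq.1.1 h1).mono Set.inter_subset_left Set.inter_subset_left)
  · positivity
  · intro p hp
    simp only [Finset.mem_filter, Finset.mem_product] at hp
    obtain ⟨⟨hp1', hp2'⟩, z, hz1, hz2⟩ := hp
    have hb1 : Bornology.IsBounded (Δ p.1) := hbdd.subset (hp1 p.1 hp1').1
    have hb2 : Bornology.IsBounded (Δ' p.2) := hbdd.subset (hq1 p.2 hp2').1
    have d1 : dist (t p.1) z ≤ δ₁ :=
      (Metric.dist_le_diam_of_mem hb1 (hp1 p.1 hp1').2.1 hz1).trans (hp1 p.1 hp1').2.2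
    have d2 : dist z (t' p.2) ≤ δ₂ :=
      (Metric.dist_le_diam_of_mem hb2 hz2 (hq1 p.2 hp2').2.1).trans (hq1 p.2 hp2').2.2
    have dtt : dist (t p.1) (t' p.2) ≤ δ₁ + δ₂ :=
      (dist_triangle _ z _).trans (add_le_add d1 d2)
    have hμσ : t p.1 ∈ σ := (hp1 p.1 hp1').1 (hp1 p.1 hp1').2.1
    have hνσ : t' p.2 ∈ σ := (hq1 p.2 hp2').1 (hq1 p.2 hp2').2.1
    refine (hGdiff _ hμσ _ hνσ).trans ?_
    have : dist (t p.1) (t' p.2) + hn * ‖Q - Q'‖ ≤ δ₁ + δ₂ + hn * ‖Q - Q'‖ := by linarith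
    exact mul_le_mul_of_nonneg_left this hC


section Res
variable (A₁ : H₁ →L[ℂ] H₁) (hA₁ : IsSelfAdjoint A₁) (B : H₁ →L[ℂ] H₂)
  (d₀ : ℝ) (hd₀ : 0 < d₀) (hn : ℝ) (hB : ‖B‖ ≤ hn) (hsmall : hn < d₀ / 2)
  (σ₂ : Set ℂ) (hsep : ∀ x ∈ spectrum ℂ A₁, ∀ y ∈ σ₂, d₀ ≤ dist x y)

theorem norm_one_le' : ‖(1 : H₁ →L[ℂ] H₁)‖ ≤ 1 := norm_id_le

include hA₁ hd₀ hB hsmall hsep in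
theorem res_unit (μ : ℂ) (hμ : μ ∈ σ₂) (Q : H₁ →L[ℂ] H₂) (hQ : ‖Q‖ ≤ 1) :
    IsUnit (A₁ + adjoint B ∘L Q - μ • 1) ∧
      ‖Ring.inverse (A₁ + adjoint B ∘L Q - μ • 1)‖ ≤ 2 / d₀ := by
  obtain ⟨hu, hinv⟩ := R0 A₁ hA₁ μ d₀ hd₀ (fun x hx => hsep x hx μ hμ)
  set c : H₁ →L[ℂ] H₁ := adjoint B ∘L Q with hc
  have hcnorm : ‖c‖ ≤ hn := by
    calc ‖c‖ ≤ ‖adjoint B‖ * ‖Q‖ := opNorm_comp_le _ _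
      _ ≤ hn * 1 := by
          refine mul_le_mul ?_ hQ (norm_nonneg _) ?_
          · rw [(ContinuousLinearMap.adjoint : (H₁ →L[ℂ] H₂) ≃ₗᵢ⋆[ℂ] _).norm_map B] at *
            exact hB
          · linarith [norm_nonneg B, hB]
      _ = hn := mul_one hn
  have hmul : ‖Ring.inverse (A₁ - μ • 1) * c‖ ≤ 1/2 := by
    calc ‖Ring.inverse (A₁ - μ • 1) * c‖ ≤ ‖Ring.inverse (A₁ - μ • 1)‖ * ‖c‖ := norm_mul_le _ _
      _ ≤ (1/d₀) * (d₀/2) := by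
          refine mul_le_mul hinv (by linarith) (norm_nonneg _) (by positivity)
      _ = 1/2 := by field_simp
  obtain ⟨hu2, hinv2⟩ := neumann norm_one_le' (A₁ - μ • 1) c hu hmul
  have heq : A₁ - μ • 1 + c = A₁ + adjoint B ∘L Q - μ • 1 := by rw [hc]; abel
  rw [heq] at hu2 hinv2
  refine ⟨hu2, hinv2.trans ?_⟩
  calc 2 * ‖Ring.inverse (A₁ - μ • 1)‖ ≤ 2 * (1/d₀) := by linarith
    _ = 2/d₀ := by ring

include hA₁ hd₀ hB hsmall hsep in
theorem res_diff (μ ν : ℂ) (hμ : μ ∈ σ₂) (hν : ν ∈ σ₂) (Q Q' : H₁ →L[ℂ] H₂)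
    (hQ : ‖Q‖ ≤ 1) (hQ' : ‖Q'‖ ≤ 1) :
    ‖Ring.inverse (A₁ + adjoint B ∘L Q - μ • 1) -
        Ring.inverse (A₁ + adjoint B ∘L Q' - ν • 1)‖
      ≤ (2/d₀)^2 * (dist μ ν + hn * ‖Q - Q'‖) := by
  obtain ⟨hu, hiu⟩ := res_unit A₁ hA₁ B d₀ hd₀ hn hB hsmall σ₂ hsep μ hμ Q hQ
  obtain ⟨hv, hiv⟩ := res_unit A₁ hA₁ B d₀ hd₀ hn hB hsmall σ₂ hsep ν hν Q' hQ'
  have hvu : (A₁ + adjoint B ∘L Q' - ν • 1) - (A₁ + adjoint B ∘L Q - μ • 1)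
      = adjoint B ∘L (Q' - Q) + (μ - ν) • 1 := by
    rw [ContinuousLinearMap.comp_sub, sub_smul]
    abel
  set u := A₁ + adjoint B ∘L Q - μ • 1 with hu_def
  set v := A₁ + adjoint B ∘L Q' - ν • 1 with hv_def
  have hvunorm : ‖v - u‖ ≤ hn * ‖Q - Q'‖ + dist μ ν := by
    rw [hvu]
    refine (norm_add_le _ _).trans (add_le_add ?_ ?_)
    · calc ‖adjoint B ∘L (Q' - Q)‖ ≤ ‖adjoint B‖ * ‖Q' - Q‖ := opNorm_comp_le _ _
        _ ≤ hn * ‖Q - Q'‖ := by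
            rw [norm_sub_rev]
            refine mul_le_mul_of_nonneg_right ?_ (norm_nonneg _)
            rw [(ContinuousLinearMap.adjoint : (H₁ →L[ℂ] H₂) ≃ₗᵢ⋆[ℂ] _).norm_map B]
            exact hB
    · rw [norm_smul, Complex.dist_eq]
      calc ‖μ - ν‖ * ‖(1 : H₁ →L[ℂ] H₁)‖ ≤ ‖μ - ν‖ * 1 :=
            mul_le_mul_of_nonneg_left norm_one_le' (norm_nonneg _)
        _ = ‖μ - ν‖ := mul_one _
  rw [resolvent_diff u v hu hv]
  calc ‖Ring.inverse u * (v - u) * Ring.inverse v‖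
      ≤ ‖Ring.inverse u * (v - u)‖ * ‖Ring.inverse v‖ := norm_mul_le _ _
    _ ≤ ‖Ring.inverse u‖ * ‖v - u‖ * ‖Ring.inverse v‖ :=
        mul_le_mul_of_nonneg_right (norm_mul_le _ _) (norm_nonneg _)
    _ ≤ (2/d₀) * (hn * ‖Q - Q'‖ + dist μ ν) * (2/d₀) := by
        have h2d : (0:ℝ) ≤ 2/d₀ := by positivity
        have hn0 : (0:ℝ) ≤ hn := le_trans (norm_nonneg B) hB
        refine mul_le_mul (mul_le_mul hiu hvunorm (norm_nonneg _) h2d) hiv (norm_nonneg _) ?_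
        exact mul_nonneg h2d (add_nonneg (mul_nonneg hn0 (norm_nonneg _)) dist_nonneg)
    _ = (2/d₀)^2 * (dist μ ν + hn * ‖Q - Q'‖) := by ring
end Res

end Aux
theorem IsTaggedPartition.mono {σ : Set ℂ} {δ δ' : ℝ} (hδ : δ ≤ δ') {ι : Type}
    {s : Finset ι} {Δ : ι → Set ℂ} {t : ι → ℂ} (h : IsTaggedPartition σ δ s Δ t) :
    IsTaggedPartition σ δ' s Δ t :=
  ⟨fun i hi => ⟨(h.1 i hi).1, (h.1 i hi).2.1, (h.1 i hi).2.2.trans hδ⟩, h.2.1, h.2.2⟩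

theorem int_unique {E : Set ℂ → (H₂ →L[ℂ] H₂)} {σ : Set ℂ} (hσ : IsCompact σ)
    {f : ℂ → (H₁ →L[ℂ] H₂)} {T T' : H₁ →L[ℂ] H₂}
    (hT : IsSpectralIntegral E σ f T) (hT' : IsSpectralIntegral E σ f T') : T = T' := by
  have key : ∀ ε > (0:ℝ), ‖T - T'‖ < ε := by
    intro ε hε
    obtain ⟨δ₁, hδ₁, h1⟩ := hT (ε/2) (by linarith)
    obtain ⟨δ₂, hδ₂, h2⟩ := hT' (ε/2) (by linarith)
    obtain ⟨s, Δ, t, hpart⟩ := partition_exists σ hσ (min δ₁ δ₂) (lt_min hδ₁ hδ₂)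
    have e1 := h1 ℕ s Δ t (hpart.mono (min_le_left _ _))
    have e2 := h2 ℕ s Δ t (hpart.mono (min_le_right _ _))
    calc ‖T - T'‖ = ‖((∑ i ∈ s, E (Δ i) ∘L f (t i)) - T') -
          ((∑ i ∈ s, E (Δ i) ∘L f (t i)) - T)‖ := by rw [sub_sub_sub_cancel_left]
      _ ≤ ‖(∑ i ∈ s, E (Δ i) ∘L f (t i)) - T'‖ +
          ‖(∑ i ∈ s, E (Δ i) ∘L f (t i)) - T‖ := norm_sub_le _ _
      _ < ε/2 + ε/2 := add_lt_add e2 e1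
      _ = ε := by ring
  by_contra hne
  have h0 : 0 < ‖T - T'‖ := by
    rw [norm_pos_iff]
    exact sub_ne_zero.mpr hne
  exact absurd (key _ h0) (lt_irrefl _)


theorem stmt9 {ι : Type*} (A₁ : H₁ →L[ℂ] H₁) (A₂ : H₂ →L[ℂ] H₂)
    (hA₁ : IsSelfAdjoint A₁) (hA₂ : IsSelfAdjoint A₂)
    (E₂ : Set ℂ → (H₂ →L[ℂ] H₂)) (hE₂ : IsSpectralMeasureFor A₂ E₂)
    (d₀ : ℝ) (hd₀ : 0 < d₀)
    (hsep : ∀ x ∈ spectrum ℂ A₁, ∀ y ∈ spectrum ℂ A₂, d₀ ≤ dist x y)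
    (B₂₁ : H₁ →L[ℂ] H₂) (e : HilbertBasis ι ℂ H₁)
    (hHS : Summable fun i => ‖B₂₁ (e i)‖ ^ 2)
    (hsmall : Real.sqrt (∑' i, ‖B₂₁ (e i)‖ ^ 2) < d₀ / 2) :
    ∃! Q : H₁ →L[ℂ] H₂, ‖Q‖ ≤ 1 ∧
      IsSpectralIntegral E₂ (spectrum ℂ A₂)
        (fun μ => B₂₁ ∘L Ring.inverse (A₁ + adjoint B₂₁ ∘L Q - μ • 1)) Q := by
  classical
  obtain ⟨hsa, hinter, hempty, htotal, hadd, hrep⟩ := hE₂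
  set σ₂ := spectrum ℂ A₂ with hσ₂def
  have hcomp : IsCompact σ₂ := spectrum.isCompact A₂
  set h : ℝ := Real.sqrt (∑' i, ‖B₂₁ (e i)‖ ^ 2) with hhdef
  have hh0 : 0 ≤ h := Real.sqrt_nonneg _
  have hB : ‖B₂₁‖ ≤ h := by
    refine hs_opnorm e B₂₁ h hh0 fun F => ?_
    rw [hhdef, Real.sq_sqrt (tsum_nonneg fun i => sq_nonneg _)]
    exact Summable.sum_le_tsum F (fun i _ => sq_nonneg _) hHS
  set G : (H₁ →L[ℂ] H₂) → ℂ → (H₁ →L[ℂ] H₁) :=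
    fun Q μ => Ring.inverse (A₁ + adjoint B₂₁ ∘L Q - μ • 1) with hGdef
  set C : ℝ := (2/d₀)^2 with hCdef
  have hC0 : 0 ≤ C := sq_nonneg _
  set KC : ℝ := h * C with hKCdef
  have hKC0 : 0 ≤ KC := mul_nonneg hh0 hC0
  -- comparison of two Riemann sums
  have hcmp : ∀ (Q Q' : H₁ →L[ℂ] H₂), ‖Q‖ ≤ 1 → ‖Q'‖ ≤ 1 →
      ∀ {δ₁ δ₂ : ℝ}, 0 ≤ δ₁ → 0 ≤ δ₂ →
      ∀ {ι₁ ι₂ : Type} {s : Finset ι₁} {Δ : ι₁ → Set ℂ} {t : ι₁ → ℂ}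
        {s' : Finset ι₂} {Δ' : ι₂ → Set ℂ} {t' : ι₂ → ℂ},
      IsTaggedPartition σ₂ δ₁ s Δ t → IsTaggedPartition σ₂ δ₂ s' Δ' t' →
      ‖(∑ i ∈ s, E₂ (Δ i) ∘L (B₂₁ ∘L G Q (t i))) -
          ∑ j ∈ s', E₂ (Δ' j) ∘L (B₂₁ ∘L G Q' (t' j))‖
        ≤ h * (C * (δ₁ + δ₂ + h * ‖Q - Q'‖)) := by
    intro Q Q' hQ hQ' δ₁ δ₂ hδ₁ hδ₂ ι₁ ι₂ s Δ t s' Δ' t' hP hP'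
    refine compare e B₂₁ hHS hsa hinter hempty hadd σ₂ hcomp.isBounded G C h hC0 hh0
      Q Q' hδ₁ hδ₂ ?_ hP hP'
    intro μ hμ ν hν
    exact res_diff A₁ hA₁ B₂₁ d₀ hd₀ h hB hsmall σ₂ hsep μ ν hμ hν Q Q' hQ hQ'
  -- the fixed partitions
  have hex : ∀ n : ℕ, ∃ s : Finset ℕ, ∃ Δ : ℕ → Set ℂ, ∃ t : ℕ → ℂ,
      IsTaggedPartition σ₂ (1/(n+1 : ℝ)) s Δ t := fun n =>
    partition_exists σ₂ hcomp _ (by positivity)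
  choose ps pΔ pt hp using hex
  set SQ : (H₁ →L[ℂ] H₂) → ℕ → (H₁ →L[ℂ] H₂) :=
    fun Q n => ∑ i ∈ ps n, E₂ (pΔ n i) ∘L (B₂₁ ∘L G Q (pt n i)) with hSQdef
  have hmesh0 : ∀ n : ℕ, (0:ℝ) ≤ 1/(n+1 : ℝ) := fun n => by positivity
  have hmesh_lim : Filter.Tendsto (fun n : ℕ => 1/(n+1 : ℝ)) Filter.atTop (nhds 0) :=
    tendsto_one_div_add_atTop_nhds_zero_nat
  -- Cauchy
  have hcauchy : ∀ Q : H₁ →L[ℂ] H₂, ‖Q‖ ≤ 1 → CauchySeq (SQ Q) := by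
    intro Q hQ
    rw [Metric.cauchySeq_iff']
    intro ε hε
    obtain ⟨N, hN⟩ := exists_nat_gt (2 * KC / ε)
    refine ⟨N, fun n hn => ?_⟩
    rw [dist_eq_norm]
    have hb := hcmp Q Q hQ hQ (hmesh0 n) (hmesh0 N) (hp n) (hp N)
    rw [sub_self, norm_zero, mul_zero, add_zero] at hb
    refine lt_of_le_of_lt hb ?_
    rw [div_lt_iff₀ hε] at hN
    have hNp : (0:ℝ) < (N:ℝ)+1 := by positivity
    have h1 : (1:ℝ)/(n+1) ≤ 1/(N+1) := by
      apply one_div_le_one_div_of_le (by positivity)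
      exact_mod_cast by omega
    have h3 : 2*KC < ε*((N:ℝ)+1) := by nlinarith
    have h4 : h * (C * (1/(n+1) + 1/(N+1))) ≤ 2*KC * (1/((N:ℝ)+1)) := by
      nlinarith [mul_nonneg hKC0 (sub_nonneg.mpr h1), hmesh0 n, hmesh0 N]
    refine lt_of_le_of_lt h4 ?_
    rw [mul_one_div, div_lt_iff₀ hNp]
    nlinarith
  -- limits
  have hlim : ∀ Q : {Q : H₁ →L[ℂ] H₂ // ‖Q‖ ≤ 1}, ∃ L : H₁ →L[ℂ] H₂,
      Filter.Tendsto (SQ Q.val) Filter.atTop (nhds L) := fun Q =>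
    cauchySeq_tendsto_of_complete (hcauchy Q.val Q.prop)
  choose Φ hΦ using hlim
  -- Φ Q is the spectral integral of f_Q
  have hΦint : ∀ Q : {Q : H₁ →L[ℂ] H₂ // ‖Q‖ ≤ 1},
      IsSpectralIntegral E₂ σ₂ (fun μ => B₂₁ ∘L G Q.val μ) (Φ Q) := by
    intro Q ε hε
    refine ⟨ε/(2*(KC+1)), by positivity, ?_⟩
    intro ι' s Δ t hpart
    have hδ0 : (0:ℝ) ≤ ε/(2*(KC+1)) := by positivity
    have hbnd : ∀ n : ℕ, ‖(∑ i ∈ s, E₂ (Δ i) ∘L (B₂₁ ∘L G Q.val (t i))) - SQ Q.val n‖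
        ≤ h * (C * ((ε/(2*(KC+1)) + 1/(n+1)) + h * ‖Q.val - Q.val‖)) :=
      fun n => hcmp Q.val Q.val Q.prop Q.prop hδ0 (hmesh0 n) hpart (hp n)
    have hR : Filter.Tendsto
        (fun n : ℕ => h * (C * ((ε/(2*(KC+1)) + 1/(n+1)) + h * ‖Q.val - Q.val‖)))
        Filter.atTop (nhds (h * (C * ((ε/(2*(KC+1)) + 0) + h * ‖Q.val - Q.val‖)))) := by
      refine Filter.Tendsto.const_mul _ (Filter.Tendsto.const_mul _ ?_)
      exact (Filter.Tendsto.add (tendsto_const_nhds.add hmesh_lim) tendsto_const_nhds)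
    have hL : Filter.Tendsto
        (fun n : ℕ => ‖(∑ i ∈ s, E₂ (Δ i) ∘L (B₂₁ ∘L G Q.val (t i))) - SQ Q.val n‖)
        Filter.atTop
        (nhds ‖(∑ i ∈ s, E₂ (Δ i) ∘L (B₂₁ ∘L G Q.val (t i))) - Φ Q‖) :=
      (Filter.Tendsto.sub tendsto_const_nhds (hΦ Q)).norm
    have hfin := le_of_tendsto_of_tendsto' hL hR hbnd
    refine lt_of_le_of_lt hfin ?_
    have heq : h * (C * ((ε/(2*(KC+1)) + 0) + h * ‖Q.val - Q.val‖))
        = KC * (ε/(2*(KC+1))) := by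
      rw [sub_self, norm_zero, hKCdef]; ring
    rw [heq]
    rw [show KC * (ε/(2*(KC+1))) = KC * ε / (2*(KC+1)) by ring,
      div_lt_iff₀ (by positivity)]
    nlinarith [mul_nonneg hKC0 hε.le]
  -- Φ maps the unit ball into itself
  have hΦball : ∀ Q : {Q : H₁ →L[ℂ] H₂ // ‖Q‖ ≤ 1}, ‖Φ Q‖ ≤ 1 := by
    intro Q
    have hSQb : ∀ n : ℕ, ‖SQ Q.val n‖ ≤ h * (2/d₀) := by
      intro n
      refine key_bound e B₂₁ hHS hsa hinter hempty (ps n) (pΔ n) ((hp n).2.1)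
        (fun i => G Q.val (pt n i)) (2/d₀) (by positivity) ?_
      intro i hi
      have hmem : pt n i ∈ σ₂ := ((hp n).1 i hi).1 ((hp n).1 i hi).2.1
      exact (res_unit A₁ hA₁ B₂₁ d₀ hd₀ h hB hsmall σ₂ hsep (pt n i) hmem
        Q.val Q.prop).2
    have hlim2 : ‖Φ Q‖ ≤ h * (2/d₀) :=
      le_of_tendsto (hΦ Q).norm (Filter.Eventually.of_forall hSQb)
    refine hlim2.trans ?_
    rw [show h * (2/d₀) = 2*h/d₀ by ring]
    rw [div_le_one hd₀]
    linarith
  -- contraction estimate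
  have hcontr : ∀ Q Q' : {Q : H₁ →L[ℂ] H₂ // ‖Q‖ ≤ 1},
      ‖Φ Q - Φ Q'‖ ≤ (KC * h) * ‖Q.val - Q'.val‖ := by
    intro Q Q'
    have hbnd : ∀ n : ℕ, ‖SQ Q.val n - SQ Q'.val n‖
        ≤ h * (C * ((1/(n+1) + 1/(n+1)) + h * ‖Q.val - Q'.val‖)) :=
      fun n => hcmp Q.val Q'.val Q.prop Q'.prop (hmesh0 n) (hmesh0 n) (hp n) (hp n)
    have hR : Filter.Tendsto
        (fun n : ℕ => h * (C * ((1/(n+1) + 1/(n+1)) + h * ‖Q.val - Q'.val‖)))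
        Filter.atTop (nhds (h * (C * ((0 + 0) + h * ‖Q.val - Q'.val‖)))) := by
      refine Filter.Tendsto.const_mul _ (Filter.Tendsto.const_mul _ ?_)
      exact (Filter.Tendsto.add (hmesh_lim.add hmesh_lim) tendsto_const_nhds)
    have hL : Filter.Tendsto (fun n : ℕ => ‖SQ Q.val n - SQ Q'.val n‖)
        Filter.atTop (nhds ‖Φ Q - Φ Q'‖) :=
      (Filter.Tendsto.sub (hΦ Q) (hΦ Q')).norm
    have := le_of_tendsto_of_tendsto' hL hR hbnd
    refine this.trans (le_of_eq ?_)
    rw [hKCdef]; ring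
  -- Banach fixed point on the unit ball
  have hball1 : IsClosed {Q : H₁ →L[ℂ] H₂ | ‖Q‖ ≤ 1} :=
    isClosed_le continuous_norm continuous_const
  haveI : CompleteSpace {Q : H₁ →L[ℂ] H₂ // ‖Q‖ ≤ 1} := hball1.completeSpace_coe
  haveI : Nonempty {Q : H₁ →L[ℂ] H₂ // ‖Q‖ ≤ 1} := ⟨⟨0, by simp⟩⟩
  set F : {Q : H₁ →L[ℂ] H₂ // ‖Q‖ ≤ 1} → {Q : H₁ →L[ℂ] H₂ // ‖Q‖ ≤ 1} :=
    fun Q => ⟨Φ Q, hΦball Q⟩ with hFdef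
  have hc0 : 0 ≤ KC * h := mul_nonneg hKC0 hh0
  have hc1 : KC * h < 1 := by
    have hd2 : 2*h/d₀ < 1 := by rw [div_lt_one hd₀]; linarith
    have hd2' : 0 ≤ 2*h/d₀ := by positivity
    have : KC * h = (2*h/d₀)^2 := by
      rw [hKCdef, hCdef]
      field_simp
    rw [this]
    nlinarith
  have hF : ContractingWith ⟨KC * h, hc0⟩ F := by
    constructor
    · change @LT.lt NNReal _ ⟨KC * h, hc0⟩ 1
      exact hc1
    · refine LipschitzWith.of_dist_le_mul fun x y => ?_
      rw [Subtype.dist_eq, Subtype.dist_eq, dist_eq_norm, dist_eq_norm]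
      exact hcontr x y
  set Q₀ : {Q : H₁ →L[ℂ] H₂ // ‖Q‖ ≤ 1} := ContractingWith.fixedPoint F hF with hQ₀def
  have hfix : F Q₀ = Q₀ := hF.fixedPoint_isFixedPt
  have hfixval : Φ Q₀ = Q₀.val := congrArg Subtype.val hfix
  refine ⟨Q₀.val, ⟨Q₀.prop, ?_⟩, ?_⟩
  · have := hΦint Q₀
    rw [hfixval] at this
    exact this
  · rintro Q' ⟨hQ'1, hQ'2⟩
    have h1 := hΦint ⟨Q', hQ'1⟩
    have h2 : Q' = Φ ⟨Q', hQ'1⟩ := int_unique hcomp hQ'2 h1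
    have h3 : Function.IsFixedPt F ⟨Q', hQ'1⟩ := Subtype.ext h2.symm
    have h4 := hF.fixedPoint_unique h3
    rw [← hQ₀def] at h4
    exact congrArg Subtype.val h4
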